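/- Given f : ℕ → ℝ, g defined as g(x) = sup { ∑_{n ∈ M} 2^{-n} : M ⊆ ℕ finite, ∀ n ∈ M, f(n) < x }, and x₀ some postfixpoint of g (i.e., x₀ ≤ g(x₀)): if x₀ = f(n₀) for some n₀ ∈ ℕ, then g(x₀ + 2^{-n₀}) ≥ x₀ + 2^{-n₀}, i.e., x₀ + 2^{-n₀} is also a postfixpoint of g. -/
import Mathlib


noncomputable def g (f : ℕ → ℝ) (x : ℝ) : ℝ :=
  sSup {s : ℝ | ∃ M : Finset ℕ, (∀ n ∈ M, f n < x) ∧ s = ∑ n ∈ M, (2:ℝ) ^ (-(n:ℤ))}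

lemma sum_pow_le_two (M : Finset ℕ) : ∑ n ∈ M, (2:ℝ) ^ (-(n:ℤ)) ≤ 2 := by
  have h1 : ∀ n : ℕ, (2:ℝ) ^ (-(n:ℤ)) = (1/2:ℝ) ^ n := by
    intro n
    rw [zpow_neg, zpow_natCast]
    rw [one_div, inv_pow]
  calc ∑ n ∈ M, (2:ℝ) ^ (-(n:ℤ)) = ∑ n ∈ M, (1/2:ℝ) ^ n := by
        exact Finset.sum_congr rfl fun n _ => h1 n
    _ ≤ ∑ n ∈ Finset.range ((M.sup id) + 1), (1/2:ℝ) ^ n := by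
        apply Finset.sum_le_sum_of_subset_of_nonneg
        · intro n hn
          simp only [Finset.mem_range, Nat.lt_succ_iff]
          exact Finset.le_sup (f := id) hn
        · intro i _ _; positivity
    _ ≤ 2 := sum_geometric_two_le _

theorem stmt4 (f : ℕ → ℝ) (x₀ : ℝ) (hx₀ : x₀ ≤ g f x₀) (n₀ : ℕ) (hn₀ : x₀ = f n₀) :
    x₀ + (2:ℝ) ^ (-(n₀:ℤ)) ≤ g f (x₀ + (2:ℝ) ^ (-(n₀:ℤ))) := by
  set ε := (2:ℝ) ^ (-(n₀:ℤ)) with hε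
  have hεpos : (0:ℝ) < ε := by positivity
  set S₁ := {s : ℝ | ∃ M : Finset ℕ, (∀ n ∈ M, f n < x₀ + ε) ∧ s = ∑ n ∈ M, (2:ℝ) ^ (-(n:ℤ))}
  have hbdd : BddAbove S₁ := ⟨2, by rintro s ⟨M, _, rfl⟩; exact sum_pow_le_two M⟩
  -- every element of S₀ plus ε lies in S₁
  have key : ∀ s ∈ {s : ℝ | ∃ M : Finset ℕ, (∀ n ∈ M, f n < x₀) ∧ s = ∑ n ∈ M, (2:ℝ) ^ (-(n:ℤ))},
      s + ε ∈ S₁ := by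
    rintro s ⟨M, hM, rfl⟩
    have hn0M : n₀ ∉ M := fun h => lt_irrefl x₀ (hn₀ ▸ hM n₀ h)
    refine ⟨insert n₀ M, ?_, ?_⟩
    · intro n hn
      rcases Finset.mem_insert.mp hn with rfl | hn
      · rw [← hn₀]; linarith
      · exact lt_of_lt_of_le (hM n hn) (by linarith)
    · rw [Finset.sum_insert hn0M]; ring
  have h2 : g f x₀ + ε ≤ sSup S₁ := by
    have : g f x₀ ≤ sSup S₁ - ε := by
      apply Real.sSup_le
      · intro s hs
        have := le_csSup hbdd (key s hs)
        linarith
      · have h0 : (0:ℝ) + ε ∈ S₁ := key 0 ⟨∅, by simp⟩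
        have := le_csSup hbdd h0
        linarith
    linarith
  calc x₀ + ε ≤ g f x₀ + ε := by linarith
    _ ≤ g f (x₀ + ε) := h2
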